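/- Conformal validity (Vovk et al., Theorem 3.14 of the paper): Let ⟨Z_1,…,Z_{n+1}⟩ : Ω → Z^{n+1} be an exchangeable sequence of random variables on a probability space (Ω,P). Then for every ε ∈ (0,1), the probability that ⟨Z_1,…,Z_{n+1}⟩ lies in the conformal prediction event Γ^ε_{n,A} is at least 1 − ε; equivalently, P( p_{n,A}((Z_1,…,Z_n), Z_{n+1}) > ε ) ≥ 1 − ε. -/

import Mathlib

open MeasureTheory

/-- A nonconformity score on sequences of length `n+1`: measurable (jointly) and invariant
under permutations of the `n+1` coordinates of its first argument. -/
def IsNonconfScore {Z : Type*} [MeasurableSpace Z] {n : ℕ}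
    (A : (Fin (n + 1) → Z) → Z → ℝ) : Prop :=
  Measurable (fun p : (Fin (n + 1) → Z) × Z => A p.1 p.2) ∧
    ∀ (σ : Equiv.Perm (Fin (n + 1))) (b : Fin (n + 1) → Z) (z : Z), A (b ∘ σ) z = A b z

/-- The conformal p-value `p_{n,A}(D, z)`: with `b := (D, z)` (i.e. `z` appended as last
coordinate), the fraction of indices `i` with `A(b, b_i) ≥ A(b, z)`. -/
noncomputable def pval {Z : Type*} [MeasurableSpace Z] {n : ℕ}
    (A : (Fin (n + 1) → Z) → Z → ℝ) (D : Fin n → Z) (z : Z) : ℝ :=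
  (Finset.univ.filter (fun i : Fin (n + 1) =>
      A (Fin.snoc D z) ((Fin.snoc D z : Fin (n + 1) → Z) i) ≥ A (Fin.snoc D z) z)).card / (n + 1)

/-- A `Z^m`-valued random variable is exchangeable if permuting its coordinates does not
change its distribution. -/
def Exchangeable {Ω Z : Type*} [MeasurableSpace Ω] [MeasurableSpace Z]
    (μ : Measure Ω) {m : ℕ} (Zs : Ω → Fin m → Z) : Prop :=
  ∀ σ : Equiv.Perm (Fin m),
    Measure.map (fun ω => (Zs ω) ∘ σ) μ = Measure.map Zs μ

open scoped ENNReal NNReal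


noncomputable def Rk {Z : Type*} {n : ℕ} (A : (Fin (n + 1) → Z) → Z → ℝ)
    (b : Fin (n + 1) → Z) (j : Fin (n + 1)) : ℕ :=
  (Finset.univ.filter (fun i : Fin (n + 1) => A b (b i) ≥ A b (b j))).card

lemma Rk_comp {Z : Type*} [MeasurableSpace Z] {n : ℕ} (A : (Fin (n + 1) → Z) → Z → ℝ)
    (hA : ∀ (σ : Equiv.Perm (Fin (n + 1))) (b : Fin (n + 1) → Z) (z : Z), A (b ∘ σ) z = A b z)
    (σ : Equiv.Perm (Fin (n + 1))) (b : Fin (n + 1) → Z) (j : Fin (n + 1)) :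
    Rk A (b ∘ σ) j = Rk A b (σ j) := by
  unfold Rk
  simp only [Function.comp_apply, hA σ b]
  refine Finset.card_bij' (fun i _ => σ i) (fun m _ => σ.symm m) ?_ ?_ ?_ ?_ <;>
    simp [Finset.mem_filter]

lemma measurable_Rk {Z : Type*} [MeasurableSpace Z] {n : ℕ}
    (A : (Fin (n + 1) → Z) → Z → ℝ)
    (hA : Measurable (fun p : (Fin (n + 1) → Z) × Z => A p.1 p.2)) (j : Fin (n + 1)) :
    Measurable fun b : Fin (n + 1) → Z => Rk A b j := by
  have h : ∀ i : Fin (n + 1), Measurable fun b : Fin (n + 1) → Z => A b (b i) := fun i =>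
    hA.comp (measurable_id.prodMk (measurable_pi_apply i))
  simp only [Rk, Finset.card_filter]
  exact Finset.measurable_sum _ fun i _ =>
    Measurable.ite (measurableSet_le (h j) (h i)) measurable_const measurable_const

lemma card_Rk_le {Z : Type*} {n : ℕ} (A : (Fin (n + 1) → Z) → Z → ℝ)
    (b : Fin (n + 1) → Z) (k : ℕ) :
    (Finset.univ.filter fun j : Fin (n + 1) => Rk A b j ≤ k).card ≤ k := by
  set S := Finset.univ.filter fun j : Fin (n + 1) => Rk A b j ≤ k with hS
  rcases S.eq_empty_or_nonempty with h | h
  · simp [h]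
  · obtain ⟨j₀, hj₀, hmin⟩ := S.exists_min_image (fun j => A b (b j)) h
    have hsub : S ⊆ Finset.univ.filter fun i => A b (b i) ≥ A b (b j₀) := by
      intro j hj
      simp only [Finset.mem_filter, Finset.mem_univ, true_and]
      exact hmin j hj
    calc S.card ≤ _ := Finset.card_le_card hsub
      _ = Rk A b j₀ := rfl
      _ ≤ k := (Finset.mem_filter.mp hj₀).2

theorem conformal_validity' {Ω Z : Type*} [MeasurableSpace Ω] [MeasurableSpace Z]
    (μ : Measure Ω) [IsProbabilityMeasure μ] {n : ℕ}
    (A : (Fin (n + 1) → Z) → Z → ℝ)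
    (hA : Measurable (fun p : (Fin (n + 1) → Z) × Z => A p.1 p.2) ∧
      ∀ (σ : Equiv.Perm (Fin (n + 1))) (b : Fin (n + 1) → Z) (z : Z), A (b ∘ σ) z = A b z)
    (Zs : Ω → Fin (n + 1) → Z) (hZs : Measurable Zs)
    (hexch : ∀ σ : Equiv.Perm (Fin (n + 1)),
      Measure.map (fun ω => (Zs ω) ∘ σ) μ = Measure.map Zs μ)
    (ε : ℝ) (hε : ε ∈ Set.Ioo (0 : ℝ) 1) :
    ENNReal.ofReal (1 - ε) ≤
      μ {ω | (Rk A (Zs ω) (Fin.last n) : ℝ) / (n + 1) > ε} := by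
  obtain ⟨hε0, hε1⟩ := hε
  set k : ℕ := ⌊ε * (n + 1)⌋₊ with hk
  have hnpos : (0 : ℝ) < (n : ℝ) + 1 := by positivity
  -- the events
  set E : Fin (n + 1) → Set Ω := fun j => {ω | Rk A (Zs ω) j ≤ k} with hE
  have hBmeas : ∀ j, MeasurableSet {b : Fin (n + 1) → Z | Rk A b j ≤ k} := by
    intro j
    have : {b : Fin (n + 1) → Z | Rk A b j ≤ k} =
        (fun b => Rk A b j) ⁻¹' (Set.Iic k) := rfl
    rw [this]
    exact (measurable_Rk A hA.1 j) measurableSet_Iic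
  have hEmeas : ∀ j, MeasurableSet (E j) := fun j => hZs (hBmeas j)
  -- all events have the same probability
  have hsame : ∀ j, μ (E j) = μ (E (Fin.last n)) := by
    intro j
    have hσ : ∀ σ : Equiv.Perm (Fin (n + 1)), Measurable fun ω => Zs ω ∘ σ := fun σ =>
      measurable_pi_lambda _ fun i => (measurable_pi_apply (σ i)).comp hZs
    set σ : Equiv.Perm (Fin (n + 1)) := Equiv.swap j (Fin.last n) with hσdef
    have h1 : E j = (fun ω => Zs ω ∘ σ) ⁻¹' {b | Rk A b (Fin.last n) ≤ k} := by
      ext ω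
      simp only [hE, Set.mem_setOf_eq, Set.mem_preimage]
      rw [Rk_comp A hA.2 σ]
      rw [hσdef, Equiv.swap_apply_right]
    have h2 : E (Fin.last n) = Zs ⁻¹' {b | Rk A b (Fin.last n) ≤ k} := rfl
    rw [h1, h2, ← Measure.map_apply (hσ σ) (hBmeas (Fin.last n)),
      ← Measure.map_apply hZs (hBmeas (Fin.last n)), hexch σ]
  -- sum bound
  have hsum : ∑ j : Fin (n + 1), μ (E j) ≤ (k : ℝ≥0∞) := by
    have h1 : ∀ j, μ (E j) = ∫⁻ ω, (E j).indicator (fun _ => (1 : ℝ≥0∞)) ω ∂μ := by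
      intro j
      rw [lintegral_indicator_const (hEmeas j), one_mul]
    calc ∑ j : Fin (n + 1), μ (E j)
        = ∫⁻ ω, ∑ j : Fin (n + 1), (E j).indicator (fun _ => (1 : ℝ≥0∞)) ω ∂μ := by
          rw [lintegral_finset_sum _ fun j _ =>
            (measurable_const.indicator (hEmeas j))]
          exact Finset.sum_congr rfl fun j _ => h1 j
      _ ≤ ∫⁻ _, (k : ℝ≥0∞) ∂μ := by
          refine lintegral_mono fun ω => ?_
          have heq : ∑ j : Fin (n + 1), (E j).indicator (fun _ => (1 : ℝ≥0∞)) ω =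
              ((Finset.univ.filter fun j : Fin (n + 1) => Rk A (Zs ω) j ≤ k).card : ℝ≥0∞) := by
            rw [Finset.card_filter]
            push_cast
            refine Finset.sum_congr rfl fun j _ => ?_
            by_cases h : Rk A (Zs ω) j ≤ k <;>
              simp [Set.indicator_apply, hE, h]
          rw [heq]
          exact (Nat.cast_le (α := ℝ≥0∞)).mpr (card_Rk_le A (Zs ω) k)
      _ = (k : ℝ≥0∞) := by simp
  -- probability of one event
  have hq : μ (E (Fin.last n)) ≤ ENNReal.ofReal ε := by
    have h1 : ((n : ℝ≥0∞) + 1) * μ (E (Fin.last n)) ≤ (k : ℝ≥0∞) := by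
      calc ((n : ℝ≥0∞) + 1) * μ (E (Fin.last n))
          = ∑ _j : Fin (n + 1), μ (E (Fin.last n)) := by
            rw [Finset.sum_const, Finset.card_univ, Fintype.card_fin]
            push_cast
            ring
        _ = ∑ j : Fin (n + 1), μ (E j) := Finset.sum_congr rfl fun j _ => (hsame j).symm
        _ ≤ (k : ℝ≥0∞) := hsum
    have hkr : (k : ℝ) ≤ ε * ((n : ℝ) + 1) := by
      rw [hk]
      exact Nat.floor_le (by positivity)
    have h2 : (k : ℝ≥0∞) ≤ ((n : ℝ≥0∞) + 1) * ENNReal.ofReal ε := by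
      calc (k : ℝ≥0∞) = ENNReal.ofReal (k : ℝ) := by rw [ENNReal.ofReal_natCast]
        _ ≤ ENNReal.ofReal (ε * ((n : ℝ) + 1)) := ENNReal.ofReal_le_ofReal hkr
        _ = ENNReal.ofReal ε * ENNReal.ofReal ((n : ℝ) + 1) := ENNReal.ofReal_mul hε0.le
        _ = ((n : ℝ≥0∞) + 1) * ENNReal.ofReal ε := by
            rw [mul_comm]
            congr 1
            rw [ENNReal.ofReal_add (by positivity) zero_le_one, ENNReal.ofReal_natCast,
              ENNReal.ofReal_one]
    exact (ENNReal.mul_le_mul_iff_right (by simp) (by simp)).mp (h1.trans h2)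
  -- identify the target set as the complement
  have hset : {ω | (Rk A (Zs ω) (Fin.last n) : ℝ) / (n + 1) > ε} = (E (Fin.last n))ᶜ := by
    ext ω
    simp only [Set.mem_setOf_eq, Set.mem_compl_iff, hE, not_le]
    rw [gt_iff_lt, lt_div_iff₀ hnpos, hk, Nat.floor_lt (by positivity)]
  rw [hset, measure_compl (hEmeas _) (measure_ne_top μ _), measure_univ]
  calc ENNReal.ofReal (1 - ε) = 1 - ENNReal.ofReal ε := by
        rw [ENNReal.ofReal_sub 1 hε0.le, ENNReal.ofReal_one]
    _ ≤ 1 - μ (E (Fin.last n)) := tsub_le_tsub_left hq 1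

/-- Conformal validity (Vovk et al.): for an exchangeable sequence `⟨Z_1,…,Z_{n+1}⟩` and any
`ε ∈ (0,1)`, the probability that the conformal p-value of the last coordinate (relative to
the first `n`) exceeds `ε` is at least `1 - ε`. -/
theorem conformal_validity {Ω Z : Type*} [MeasurableSpace Ω] [MeasurableSpace Z]
    (μ : Measure Ω) [IsProbabilityMeasure μ] {n : ℕ}
    (A : (Fin (n + 1) → Z) → Z → ℝ) (hA : IsNonconfScore A)
    (Zs : Ω → Fin (n + 1) → Z) (hZs : Measurable Zs)
    (hexch : Exchangeable μ Zs)
    (ε : ℝ) (hε : ε ∈ Set.Ioo (0 : ℝ) 1) :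
    ENNReal.ofReal (1 - ε) ≤
      μ {ω | pval A (Fin.init (Zs ω)) (Zs ω (Fin.last n)) > ε} := by
  have hpv : ∀ ω, pval A (Fin.init (Zs ω)) (Zs ω (Fin.last n)) =
      (Rk A (Zs ω) (Fin.last n) : ℝ) / (n + 1) := by
    intro ω
    unfold pval Rk
    rw [Fin.snoc_init_self]
  simp only [hpv]
  exact conformal_validity' μ A ⟨hA.1, hA.2⟩ Zs hZs hexch ε hε
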